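/- Let T > 0 and n ∈ ℕ. For each k ∈ ℕ let I₁^k,…,I_{N_k}^k be pairwise disjoint open intervals in (0,T) such that (i) the union of their closures is [0,T], (ii) max_{i=1,…,N_k} λ(I_i^k) → 0 as k → ∞, and (iii) every interval I_r^{k+1} is contained in some interval I_i^k. Let w ∈ L¹((0,T);ℝⁿ) satisfy ∫_{I_i^k} w dλ = 0 for all i = 1,…,N_k and all k ∈ ℕ. Then w = 0 almost everywhere in (0,T). -/
import Mathlib


open MeasureTheory Set Filter Metric
open scoped ENNReal NNReal

/-- if an integrable function `w` on `(0,T)` with values in `ℝⁿ`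
has vanishing integral over every interval of a nested sequence of partitions
of `[0,T]` into disjoint open intervals whose maximal length tends to zero,
then `w = 0` almost everywhere in `(0,T)`. -/
theorem stmt_8
    (T : ℝ) (hT : 0 < T) (n : ℕ)
    (N : ℕ → ℕ) (a b : (k : ℕ) → Fin (N k) → ℝ)
    (hab : ∀ k i, a k i < b k i)
    (hsub : ∀ k i, Ioo (a k i) (b k i) ⊆ Ioo (0:ℝ) T)
    (hdisj : ∀ k, ∀ i i' : Fin (N k), i ≠ i' →
      Disjoint (Ioo (a k i) (b k i)) (Ioo (a k i') (b k i')))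
    (hcover : ∀ k, (⋃ i : Fin (N k), Icc (a k i) (b k i)) = Icc (0:ℝ) T)
    (hlen : Tendsto (fun k => ⨆ i : Fin (N k), (b k i - a k i)) atTop (nhds 0))
    (hnested : ∀ k, ∀ r : Fin (N (k+1)), ∃ i : Fin (N k),
      Ioo (a (k+1) r) (b (k+1) r) ⊆ Ioo (a k i) (b k i))
    (w : ℝ → Fin n → ℝ)
    (hw : Integrable w (volume.restrict (Ioo (0:ℝ) T)))
    (hint : ∀ k, ∀ i : Fin (N k),
      (∫ t in Ioo (a k i) (b k i), w t ∂(volume.restrict (Ioo (0:ℝ) T))) = 0) :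
    w =ᵐ[volume.restrict (Ioo (0:ℝ) T)] 0 := by
  classical
  -- a Vitali family on ℝ
  have hdoub : ∀ x : ℝ, ∃ᶠ r in nhdsWithin (0:ℝ) (Ioi 0),
      volume (closedBall x (3 * r)) ≤ ((6 : ℝ≥0) : ℝ≥0∞) * volume (closedBall x r) := by
    intro x
    refine Eventually.frequently ?_
    filter_upwards [self_mem_nhdsWithin] with r (hr : r ∈ Ioi (0:ℝ))
    rw [Real.volume_closedBall, Real.volume_closedBall]
    have h6 : ((6 : ℝ≥0) : ℝ≥0∞) = ENNReal.ofReal 6 := by simp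
    rw [h6, ← ENNReal.ofReal_mul (by norm_num)]
    exact ENNReal.ofReal_le_ofReal (by nlinarith [hr.out])
  set v : VitaliFamily (volume : Measure ℝ) := Vitali.vitaliFamily volume 6 hdoub with hv
  -- the extended function
  set f : ℝ → Fin n → ℝ := (Ioo (0:ℝ) T).indicator w with hf
  have hf_int : Integrable f volume :=
    IntegrableOn.integrable_indicator hw measurableSet_Ioo
  have hf_loc : LocallyIntegrable f volume := hf_int.locallyIntegrable
  -- endpoints form a null set
  set E : Set ℝ := ⋃ k, ⋃ i : Fin (N k), ({a k i} ∪ {b k i} : Set ℝ) with hE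
  have hEnull : volume E = 0 := by
    refine Set.Countable.measure_zero ?_ _
    exact Set.countable_iUnion fun k => Set.countable_iUnion fun i =>
      ((Set.countable_singleton _).union (Set.countable_singleton _))
  have key : ∀ᵐ x ∂(volume : Measure ℝ), x ∈ Ioo (0:ℝ) T → w x = 0 := by
    filter_upwards [v.ae_tendsto_average hf_loc, measure_eq_zero_iff_ae_notMem.1 hEnull]
      with x hx hxE hxT
    -- choose for each k an interval of the k-th partition containing x
    have hidx : ∀ k, ∃ i : Fin (N k), x ∈ Ioo (a k i) (b k i) := by
      intro k
      have hxIcc : x ∈ Icc (0:ℝ) T := ⟨hxT.1.le, hxT.2.le⟩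
      rw [← hcover k] at hxIcc
      obtain ⟨i, hi⟩ := mem_iUnion.1 hxIcc
      have hna : x ≠ a k i := fun h => hxE (mem_iUnion.2 ⟨k, mem_iUnion.2 ⟨i, Or.inl h⟩⟩)
      have hnb : x ≠ b k i := fun h => hxE (mem_iUnion.2 ⟨k, mem_iUnion.2 ⟨i, Or.inr h⟩⟩)
      exact ⟨i, lt_of_le_of_ne hi.1 (Ne.symm hna), lt_of_le_of_ne hi.2 hnb⟩
    choose i hi using hidx
    set s : ℕ → Set ℝ := fun k => Icc (a k (i k)) (b k (i k)) with hs
    set L : ℕ → ℝ := fun k => b k (i k) - a k (i k) with hL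
    have hLpos : ∀ k, 0 < L k := fun k => sub_pos.2 (hab k (i k))
    have hLle : ∀ k, L k ≤ ⨆ j : Fin (N k), (b k j - a k j) := fun k =>
      le_ciSup (Set.Finite.bddAbove
        (Set.finite_range (fun j : Fin (N k) => b k j - a k j))) (i k)
    have hLtend : Tendsto L atTop (nhds 0) :=
      squeeze_zero (fun k => (hLpos k).le) hLle hlen
    have hball : ∀ k, ∀ ε : ℝ, L k ≤ ε → s k ⊆ closedBall x ε := by
      intro k ε hε y hy
      have h1 := (hi k).1
      have h2 := (hi k).2
      have h3 : a k (i k) ≤ y := hy.1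
      have h4 : y ≤ b k (i k) := hy.2
      have hLk : b k (i k) - a k (i k) ≤ ε := hε
      rw [mem_closedBall, Real.dist_eq, abs_sub_le_iff]
      exact ⟨by linarith, by linarith⟩
    have hsets : ∀ k, s k ∈ v.setsAt x := by
      intro k
      refine ⟨isClosed_Icc, ?_, L k, hball k (L k) le_rfl, ?_⟩
      · rw [interior_Icc]
        exact ⟨x, hi k⟩
      · rw [Real.volume_closedBall, Real.volume_Icc]
        have h6 : ((6 : ℝ≥0) : ℝ≥0∞) = ENNReal.ofReal 6 := by simp
        rw [h6, ← ENNReal.ofReal_mul (by norm_num)]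
        exact ENNReal.ofReal_le_ofReal (by simp only [hL]; nlinarith [hLpos k])
    have htend : Tendsto s atTop (v.filterAt x) := by
      rw [VitaliFamily.tendsto_filterAt_iff]
      refine ⟨Eventually.of_forall hsets, fun ε hε => ?_⟩
      filter_upwards [hLtend.eventually_le_const hε] with k hk
      exact hball k ε hk
    have havg : ∀ k, (⨍ y in s k, f y ∂(volume : Measure ℝ)) = 0 := by
      intro k
      have h1 : (∫ y in s k, f y ∂(volume : Measure ℝ)) = 0 := by
        rw [hs]
        rw [MeasureTheory.integral_Icc_eq_integral_Ioo,
          setIntegral_indicator measurableSet_Ioo]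
        have h2 := hint k (i k)
        rwa [Measure.restrict_restrict measurableSet_Ioo] at h2
      rw [setAverage_eq, h1, smul_zero]
    have h0 : Tendsto (fun k => ⨍ y in s k, f y ∂(volume : Measure ℝ)) atTop
        (nhds (0 : Fin n → ℝ)) := by
      simpa only [havg] using (tendsto_const_nhds :
        Tendsto (fun _ : ℕ => (0 : Fin n → ℝ)) atTop (nhds 0))
    have hfx : f x = 0 := tendsto_nhds_unique (hx.comp htend) h0
    rwa [hf, indicator_of_mem hxT] at hfx
  have : ∀ᵐ x ∂(volume.restrict (Ioo (0:ℝ) T)), w x = 0 :=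
    (ae_restrict_iff' measurableSet_Ioo).2 key
  filter_upwards [this] with x hx
  simp [hx]
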